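/- arXiv:1607.07036 — 6 statements merged into one kernel-verified Lean document; each statement's English description precedes it below -/
import Mathlib

section
/- Let (X, ▷) be a finite rack with associated permutations f_y (f_y(x) = x ▷ y), and let S ⊆ X be a subrack, i.e., z ▷ y ∈ S for all y, z ∈ S. For T ⊆ X define the out-degree d_T⁺(v) := |{w ∈ X : w ≠ v ∧ ∃ i ∈ T, f_i(v) = w}|, and let r_S be the relation r_S(u, v) := (u ≠ v ∧ ∃ i ∈ S, f_i(u) = v). If u, v ∈ X are related by the equivalence relation generated by r_S (i.e., lie in the same component of the graph G_S), then d_S⁺(u) = d_S⁺(v). -/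
/-!
Each right translation `f_i` with `i ∈ S` maps `S` into itself injectively, hence (`S` being
finite) onto itself. Self-distributivity `f_i (u ▷ j) = f_i u ▷ f_i j` then shows that `f_i` maps
the out-neighbourhood of `u` in `G_S` bijectively onto that of `f_i u`, so the out-degree is
constant along edges and therefore on components.
-/

/-- A binary operation `op` on `X` is a rack operation if every right
translation `x ↦ op x y` is a bijection and the self-distributivity law holds. -/
def IsRack {X : Type*} (op : X → X → X) : Prop :=
  (∀ y, Function.Bijective fun x => op x y) ∧
    ∀ x y z, op (op x y) z = op (op x z) (op y z)

section OutNeighbors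

variable {X : Type*} (op : X → X → X) (S : Set X)

def outNeighbors (u : X) : Set X := {w | w ≠ u ∧ ∃ j ∈ S, op u j = w}

variable {op S}

theorem image_outNeighbors (hdist : ∀ x y z, op (op x y) z = op (op x z) (op y z)) {i : X}
    (hinj : Function.Injective fun x => op x i) (hmaps : Set.MapsTo (fun x => op x i) S S)
    (hsurj : Set.SurjOn (fun x => op x i) S S) (u : X) :
    (fun x => op x i) '' outNeighbors op S u = outNeighbors op S (op u i) := by
  ext w
  constructor
  · rintro ⟨_, ⟨hne, j, hj, rfl⟩, rfl⟩
    exact ⟨hinj.ne hne, op j i, hmaps hj, (hdist u j i).symm⟩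
  · rintro ⟨hne, _, hj', rfl⟩
    obtain ⟨j, hj, rfl⟩ := hsurj hj'
    refine ⟨op u j, ⟨fun h => hne ?_, j, hj, rfl⟩, hdist u j i⟩
    rw [← hdist, h]

theorem IsRack.ncard_outNeighbors_op [Finite X] (hrack : IsRack op)
    (hS : ∀ y ∈ S, ∀ z ∈ S, op z y ∈ S) {i : X} (hi : i ∈ S) (u : X) :
    (outNeighbors op S (op u i)).ncard = (outNeighbors op S u).ncard := by
  have hinj : Function.Injective fun x => op x i := (hrack.1 i).1
  have hmaps : Set.MapsTo (fun x => op x i) S S := fun j hj => hS i hi j hj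
  have hsurj : Set.SurjOn (fun x => op x i) S S :=
    ((S.toFinite.injOn_iff_bijOn_of_mapsTo hmaps).mp hinj.injOn).surjOn
  rw [← image_outNeighbors hrack.2 hinj hmaps hsurj, Set.ncard_image_of_injective _ hinj]

end OutNeighbors

/-- Let `(X, op)` be a finite rack and `S ⊆ X` a subrack (closed under `op`).
If `u` and `v` lie in the same component of the graph `G_S` (i.e. are related
by the equivalence relation generated by its edge relation), then they have the
same out-degree with respect to `S`. -/
theorem statement6 {X : Type*} [Finite X] (op : X → X → X) (hrack : IsRack op)
    (S : Set X) (hS : ∀ y ∈ S, ∀ z ∈ S, op z y ∈ S)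
    (u v : X)
    (huv : Relation.EqvGen (fun a b => a ≠ b ∧ ∃ i ∈ S, op a i = b) u v) :
    Set.ncard {w | w ≠ u ∧ ∃ i ∈ S, op u i = w} =
      Set.ncard {w | w ≠ v ∧ ∃ i ∈ S, op v i = w} := by
  have hedge : ∀ a b, (a ≠ b ∧ ∃ i ∈ S, op a i = b) →
      (outNeighbors op S a).ncard = (outNeighbors op S b).ncard := by
    rintro a _ ⟨-, i, hi, rfl⟩
    exact (hrack.ncard_outNeighbors_op hS hi a).symm
  -- the degree, being constant along edges, descends to the quotient by the generated equivalence
  exact congrArg (Quot.lift _ hedge) (Quot.eqvGen_sound huv)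
end

section
/- Let V be a finite set and let r, s₁, s₂ be relations on V. Writing cp(t) for the number of equivalence classes of the equivalence relation generated by a relation t on V, one has cp(r) + cp(r ⊔ s₁ ⊔ s₂) ≥ cp(r ⊔ s₁) + cp(r ⊔ s₂); equivalently, cp(r) − cp(r ⊔ s₂) ≥ cp(r ⊔ s₁) − cp(r ⊔ s₁ ⊔ s₂). -/
/-!
Adding a single edge `(a, b)` to a relation lowers the number of classes by one if `a` and `b`
lie in different classes and leaves it unchanged otherwise. If `A ≤ B`, classes of `A` are
finer than those of `B`, so an edge lowers the count for `A` at least as much as for `B`.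
Adding the edges of `s₂` one at a time to `A = r` and `B = r ⊔ s₁` and summing gives the
inequality.
-/

open Relation

section

variable {V : Type*}

def edgeRel (E : Set (V × V)) : V → V → Prop := fun u v => (u, v) ∈ E

theorem edgeRel_empty : edgeRel (∅ : Set (V × V)) = ⊥ := rfl

theorem edgeRel_insert (p : V × V) (E : Set (V × V)) :
    edgeRel (insert p E) = edgeRel {p} ⊔ edgeRel E := rfl

theorem eqvGen_sup_edgeRel_singleton {t : V → V → Prop} {p : V × V} {x y : V}
    (h : EqvGen (t ⊔ edgeRel {p}) x y) :
    EqvGen t x y ∨ (EqvGen t x p.1 ∧ EqvGen t p.2 y) ∨ (EqvGen t x p.2 ∧ EqvGen t p.1 y) := by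
  induction h with
  | rel _ _ huv =>
    rcases huv with h | rfl
    · exact .inl (.rel _ _ h)
    · exact .inr (.inl ⟨.refl _, .refl _⟩)
  | refl u => exact .inl (.refl u)
  | symm => grind [EqvGen.symm]
  | trans => grind [EqvGen.symm, EqvGen.trans]

def Quot.equivOfLeEqvGen {t t' : V → V → Prop} (h : t ≤ t') (h' : t' ≤ EqvGen t) :
    Quot t ≃ Quot t' where
  toFun := Quot.factor t t' h
  invFun := Quot.lift (Quot.mk t) fun _ _ huv => Quot.eqvGen_sound (h' _ _ huv)
  left_inv := Quot.ind fun _ => rfl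
  right_inv := Quot.ind fun _ => rfl

theorem card_quot_sup_edgeRel_singleton_of_eqvGen {t : V → V → Prop} {p : V × V}
    (hp : EqvGen t p.1 p.2) : Nat.card (Quot (t ⊔ edgeRel {p})) = Nat.card (Quot t) := by
  refine (Nat.card_congr (Quot.equivOfLeEqvGen le_sup_left (sup_le ?_ ?_))).symm
  · exact EqvGen.rel
  · rintro u v rfl
    exact hp

theorem card_quot_sup_edgeRel_singleton_add_one [Finite V] {t : V → V → Prop} {p : V × V}
    (hp : ¬ EqvGen t p.1 p.2) : Nat.card (Quot (t ⊔ edgeRel {p})) + 1 = Nat.card (Quot t) := by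
  classical
  let π := Quot.factor t (t ⊔ edgeRel {p}) fun _ _ => Or.inl
  let g (q : Quot t) : Option (Quot (t ⊔ edgeRel {p})) :=
    if q = Quot.mk t p.2 then none else some (π q)
  have hg : g.Bijective := by
    constructor
    · rintro ⟨x⟩ ⟨y⟩ hxy
      simp only [g] at hxy
      split_ifs at hxy with hx hy hy
      · exact hx.trans hy.symm
      · replace hxy : Quot.mk (t ⊔ edgeRel {p}) x = Quot.mk _ y := Option.some_injective _ hxy
        rw [Quot.eq] at hx hy hxy ⊢
        rcases eqvGen_sup_edgeRel_singleton hxy with h | ⟨-, h⟩ | ⟨h, -⟩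
        · exact h
        · exact absurd h.symm hy
        · exact absurd h hx
    · rintro (_ | ⟨⟨x⟩⟩)
      · exact ⟨Quot.mk t p.2, if_pos rfl⟩
      · by_cases hx : Quot.mk t x = Quot.mk t p.2
        · refine ⟨Quot.mk t p.1, ?_⟩
          calc g (Quot.mk t p.1) = some (π (Quot.mk t p.1)) := if_neg (mt Quot.eqvGen_exact hp)
            _ = some (π (Quot.mk t p.2)) := congrArg some (Quot.sound (.inr rfl))
            _ = some (π (Quot.mk t x)) := by rw [hx]
        · exact ⟨Quot.mk t x, if_neg hx⟩
  rw [← Finite.card_option, Nat.card_congr (Equiv.ofBijective g hg)]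

theorem card_quot_sup_edgeRel_singleton_submodular [Finite V] {A B : V → V → Prop} (hAB : A ≤ B)
    (p : V × V) :
    Nat.card (Quot (A ⊔ edgeRel {p})) + Nat.card (Quot B) ≤
      Nat.card (Quot A) + Nat.card (Quot (B ⊔ edgeRel {p})) := by
  by_cases hB : EqvGen B p.1 p.2
  · rw [card_quot_sup_edgeRel_singleton_of_eqvGen hB]
    by_cases hA : EqvGen A p.1 p.2
    · rw [card_quot_sup_edgeRel_singleton_of_eqvGen hA]
    · have := card_quot_sup_edgeRel_singleton_add_one hA
      omega
  · have hA : ¬ EqvGen A p.1 p.2 := fun h => hB (EqvGen.mono hAB _ _ h)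
    have := card_quot_sup_edgeRel_singleton_add_one hA
    have := card_quot_sup_edgeRel_singleton_add_one hB
    omega

theorem card_quot_sup_edgeRel_submodular [Finite V] {A B : V → V → Prop} (hAB : A ≤ B)
    (E : Set (V × V)) :
    Nat.card (Quot (A ⊔ edgeRel E)) + Nat.card (Quot B) ≤
      Nat.card (Quot A) + Nat.card (Quot (B ⊔ edgeRel E)) := by
  induction E, E.toFinite using Set.Finite.induction_on with
  | empty => rw [edgeRel_empty, sup_bot_eq, sup_bot_eq]
  | @insert p E _ _ ih =>
    rw [edgeRel_insert, ← sup_assoc, ← sup_assoc, sup_right_comm A, sup_right_comm B]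
    have := card_quot_sup_edgeRel_singleton_submodular (sup_le_sup_right hAB (edgeRel E)) p
    omega

end

/-- Submodularity of the number of components: for relations (edge sets)
`r, s₁, s₂` on a finite vertex set `V`, writing `cp t = Nat.card (Quot t)` for
the number of equivalence classes of the equivalence relation generated by `t`,
we have `cp (r ⊔ s₁) + cp (r ⊔ s₂) ≤ cp r + cp (r ⊔ s₁ ⊔ s₂)`, i.e.
`cp r - cp (r ⊔ s₂) ≥ cp (r ⊔ s₁) - cp (r ⊔ s₁ ⊔ s₂)`. -/
theorem statement7 {V : Type*} [Finite V] (r s₁ s₂ : V → V → Prop) :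
    Nat.card (Quot (r ⊔ s₁)) + Nat.card (Quot (r ⊔ s₂)) ≤
      Nat.card (Quot r) + Nat.card (Quot (r ⊔ s₁ ⊔ s₂)) := by
  rw [add_comm]
  exact card_quot_sup_edgeRel_submodular le_sup_left {p | s₂ p.1 p.2}
end

section
/- Let V be a finite set, let r and s be relations on V, and let u, v ∈ V; let e be the relation on V holding exactly for the pair (u, v). Write cp(t) for the number of equivalence classes of the equivalence relation generated by a relation t, and say that an equivalence class C of the equivalence relation generated by r is merged by a relation t if there exist x ∈ C and y ∉ C with t(x, y) or t(y, x); let M(r, t) denote the set of such classes. If cp(r ⊔ s ⊔ e) = cp(r ⊔ s), then M(r, s ⊔ e) = M(r, s). -/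
/-!
Edges `e` that do not lower the number of components of `r ⊔ s` only join vertices already
connected in `r ⊔ s`: the quotient map `Quot (r ⊔ s) → Quot (r ⊔ s ⊔ e)` is a surjection
between finite sets of equal size, hence injective. So if an `e`-edge crosses a component `C`
of `r`, some path in `r ⊔ s` leaves `C`, and as no `r`-edge leaves `C`, an `s`-edge on that
path crosses `C`.
-/

/-- The set of components (equivalence classes of the equivalence relation
generated by `r`) merged by the edge relation `t`: those classes `C` having an
edge of `t` with exactly one endpoint in `C`. -/
def mergedComponents {V : Type*} (r t : V → V → Prop) : Set (Set V) :=
  {C | (∃ a, C = {b | Relation.EqvGen r a b}) ∧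
    ∃ x ∈ C, ∃ y, y ∉ C ∧ (t x y ∨ t y x)}

theorem Quot.factor_surjective {V : Type*} (r t : V → V → Prop) (h : ∀ x y, r x y → t x y) :
    Function.Surjective (Quot.factor r t h) :=
  Quot.ind fun x => ⟨Quot.mk r x, rfl⟩

namespace Relation

variable {V : Type*}

theorem EqvGen.of_card_quot_sup_eq [Finite V] {t e : V → V → Prop}
    (hcard : Nat.card (Quot (t ⊔ e)) = Nat.card (Quot t)) {a b : V} (hab : e a b) :
    EqvGen t a b := by
  have hle : ∀ x y, t x y → (t ⊔ e) x y := fun _ _ => Or.inl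
  have hbij : Function.Bijective (Quot.factor t (t ⊔ e) hle) :=
    (Nat.bijective_iff_surjective_and_card _).mpr
      ⟨Quot.factor_surjective t (t ⊔ e) hle, hcard.symm⟩
  exact Quot.eqvGen_exact (hbij.injective (Quot.sound (Or.inr hab)))

theorem EqvGen.exists_crossing_of_sup {r s : V → V → Prop} {C : Set V}
    (hC : ∀ x y, r x y → (x ∈ C ↔ y ∈ C)) {x y : V} (hxy : EqvGen (r ⊔ s) x y)
    (hx : x ∈ C) (hy : y ∉ C) : ∃ p ∈ C, ∃ q, q ∉ C ∧ (s p q ∨ s q p) := by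
  by_contra! hno
  have hinv : ∀ p q, (r ⊔ s) p q → (p ∈ C ↔ q ∈ C) := by
    rintro p q (hr | hs)
    · exact hC p q hr
    · by_cases hp : p ∈ C <;> by_cases hq : q ∈ C
      · exact iff_of_true hp hq
      · exact absurd hs (hno p hp q hq).1
      · exact absurd hs (hno q hq p hp).2
      · exact iff_of_false hp hq
  have hmem : (x ∈ C) = (y ∈ C) :=
    congrArg (Quot.lift (· ∈ C) fun p q hpq => propext (hinv p q hpq)) (Quot.eqvGen_sound hxy)
  exact hy (hmem ▸ hx)

theorem EqvGen.mem_class_iff_of_rel {r : V → V → Prop} (a : V) {x y : V} (hxy : r x y) :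
    x ∈ {b | EqvGen r a b} ↔ y ∈ {b | EqvGen r a b} :=
  ⟨fun hx => hx.trans _ _ _ (EqvGen.rel _ _ hxy),
    fun hy => hy.trans _ _ _ ((EqvGen.rel _ _ hxy).symm _ _)⟩

end Relation

open Relation

theorem mergedComponents_mono {V : Type*} (r : V → V → Prop) {t t' : V → V → Prop}
    (htt' : t ≤ t') : mergedComponents r t ⊆ mergedComponents r t' := by
  rintro C ⟨hC, x, hx, y, hy, hxy⟩
  exact ⟨hC, x, hx, y, hy, hxy.imp (htt' x y) (htt' y x)⟩

theorem mergedComponents_sup_of_eqvGen {V : Type*} {r s e : V → V → Prop}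
    (he : ∀ a b, e a b → EqvGen (r ⊔ s) a b) :
    mergedComponents r (s ⊔ e) = mergedComponents r s := by
  refine (mergedComponents_mono r le_sup_left).antisymm' ?_
  rintro C ⟨⟨a, rfl⟩, x, hx, y, hy, hxy⟩
  refine ⟨⟨a, rfl⟩, ?_⟩
  have hclass (p q : V) (hpq : r p q) : p ∈ {b | EqvGen r a b} ↔ q ∈ {b | EqvGen r a b} :=
    EqvGen.mem_class_iff_of_rel a hpq
  rcases hxy with (hs | hexy) | (hs | heyx)
  · exact ⟨x, hx, y, hy, Or.inl hs⟩
  · exact (he x y hexy).exists_crossing_of_sup hclass hx hy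
  · exact ⟨x, hx, y, hy, Or.inr hs⟩
  · exact ((he y x heyx).symm _ _).exists_crossing_of_sup hclass hx hy

theorem statement8_general {V : Type*} [Finite V] (r s : V → V → Prop)
    (e : V → V → Prop)
    (h : Nat.card (Quot (r ⊔ s ⊔ e)) = Nat.card (Quot (r ⊔ s))) :
    mergedComponents r (s ⊔ e) = mergedComponents r s :=
  mergedComponents_sup_of_eqvGen fun _ _ hab => EqvGen.of_card_quot_sup_eq h hab

/-- If adding the single edge `e = (u, v)` to `r ⊔ s` does not change the number
of components, then the components of `r` merged by `s ⊔ e` are exactly those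
merged by `s`. -/
theorem statement8 {V : Type*} [Finite V] (r s : V → V → Prop) (u v : V)
    (e : V → V → Prop) (he : ∀ a b, e a b ↔ a = u ∧ b = v)
    (h : Nat.card (Quot (r ⊔ s ⊔ e)) = Nat.card (Quot (r ⊔ s))) :
    mergedComponents r (s ⊔ e) = mergedComponents r s :=
  statement8_general r s e h
end

section
/- There exists a positive integer N such that for every integer n ≥ N and every rack (Fin n, ▷) with associated permutations f_y (f_y(x) = x ▷ y), there exists a subset U ⊆ Fin n with |U| ≤ (3/2)·n/(log₂ n)^{3/2} such that every v ∈ Fin n with d_{Fin n}⁺(v) > (log₂ n)³ satisfies d_U⁺(v) > (log₂ n)^{3/2}/2; consequently the number of components of the graph G_U that are contained in S_{>Δ} := {v : d_{Fin n}⁺(v) > (log₂ n)³} is at most 2n/(log₂ n)^{3/2}. -/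
/-!
Choose `U` at random, containing each point independently with probability `p = 1/L`, where
`L = (log₂ n)^(3/2)`. By Markov's inequality, `|U| ≥ (3/2) n / L` has probability at most `2/3`.
A vertex of out-degree `d > (log₂ n)³ = L²` has a set `J` of `d` colours with pairwise distinct
images other than itself, and the exponential-moment bound gives
`P(|U ∩ J| ≤ L/2) ≤ 2^(L/2) E[2^(-|U ∩ J|)] = 2^(L/2) (1 - p/2)^d ≤ exp(-(1 - log 2) L/2)`;
`n` times this is below `1/3`, so some `U` has both properties. A component of `G_U` inside the
high-degree set contains a vertex with its more than `L/2` out-neighbours, and components are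
disjoint, so there are at most `2n/L` of them.
-/

open Finset Real

namespace RandomSubset

variable {α : Type*} [Fintype α] [DecidableEq α]

/-- The law of the random subset of `α` containing each point independently with
probability `p`. -/
def bernoulliWeight (p : ℝ) (U : Finset α) : ℝ := p ^ #U * (1 - p) ^ #Uᶜ

lemma bernoulliWeight_nonneg {p : ℝ} (hp₀ : 0 ≤ p) (hp₁ : p ≤ 1) (U : Finset α) :
    0 ≤ bernoulliWeight p U := by
  have : 0 ≤ 1 - p := by linarith
  unfold bernoulliWeight
  positivity

theorem sum_bernoulliWeight_mul_prod (p : ℝ) (a : α → ℝ) :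
    ∑ U, bernoulliWeight p U * ∏ i ∈ U, a i = ∏ i, (p * a i + (1 - p)) := by
  rw [prod_add, powerset_univ]
  refine sum_congr rfl fun U _ => ?_
  rw [prod_mul_distrib, prod_const, prod_const, ← compl_eq_univ_sdiff, bernoulliWeight]
  ring

theorem sum_bernoulliWeight (p : ℝ) : ∑ U : Finset α, bernoulliWeight p U = 1 := by
  simpa using sum_bernoulliWeight_mul_prod (α := α) p 1

theorem sum_bernoulliWeight_mul_indicator_mem (p : ℝ) (j : α) :
    ∑ U, bernoulliWeight p U * (if j ∈ U then 1 else 0) = p := by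
  have h := sum_bernoulliWeight_mul_prod p fun i => if i = j then 0 else 1
  rw [Fintype.prod_eq_single j fun i hi => by simp [hi]] at h
  simp only [prod_ite_eq', if_true, mul_zero, zero_add] at h
  have hsplit (U : Finset α) : (if j ∈ U then (0 : ℝ) else 1) = 1 - if j ∈ U then 1 else 0 := by
    split_ifs <;> norm_num
  simp only [hsplit, mul_sub, mul_one, sum_sub_distrib, sum_bernoulliWeight] at h
  linarith

theorem sum_bernoulliWeight_mul_card (p : ℝ) :
    ∑ U : Finset α, bernoulliWeight p U * #U = p * Fintype.card α := by
  calc ∑ U : Finset α, bernoulliWeight p U * #U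
      = ∑ U : Finset α, ∑ j, bernoulliWeight p U * (if j ∈ U then 1 else 0) := by
        refine sum_congr rfl fun U _ => ?_
        simp [mul_comm]
    _ = ∑ _j : α, p := by
        rw [sum_comm]; simp only [sum_bernoulliWeight_mul_indicator_mem]
    _ = p * Fintype.card α := by simp [mul_comm]

theorem sum_bernoulliWeight_mul_pow_card_inter (p t : ℝ) (J : Finset α) :
    ∑ U, bernoulliWeight p U * t ^ #(U ∩ J) = (1 - p * (1 - t)) ^ #J := by
  have h := sum_bernoulliWeight_mul_prod p fun i => if i ∈ J then t else 1
  have hfactor (i : α) :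
      p * (if i ∈ J then t else 1) + (1 - p) = if i ∈ J then 1 - p * (1 - t) else 1 := by
    split_ifs <;> ring
  simpa only [prod_ite_mem, prod_const, hfactor, univ_inter] using h


theorem exists_lt_one_of_sum_bernoulliWeight_mul_lt_one {p : ℝ} (hp₀ : 0 ≤ p) (hp₁ : p ≤ 1)
    {F : Finset α → ℝ} (h : ∑ U, bernoulliWeight p U * F U < 1) : ∃ U, F U < 1 := by
  by_contra! hF
  have := sum_le_sum fun U (_ : U ∈ univ) =>
    mul_le_mul_of_nonneg_left (hF U) (bernoulliWeight_nonneg hp₀ hp₁ U)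
  simp only [mul_one, sum_bernoulliWeight] at this
  linarith

/-- Average over `U` the bounds `1[#U ≥ m] ≤ #U / m` (Markov) and
`1[#(U ∩ J v) ≤ k] ≤ t ^ #(U ∩ J v) / t ^ k` (exponential moment). -/
theorem exists_card_lt_and_lt_card_inter {ι : Type*} (H : Finset ι) (J : ι → Finset α)
    {p t m : ℝ} (k : ℕ) (hp₀ : 0 ≤ p) (hp₁ : p ≤ 1) (ht₀ : 0 < t) (ht₁ : t ≤ 1) (hm : 0 < m)
    (h : p * Fintype.card α / m + ∑ v ∈ H, (1 - p * (1 - t)) ^ #(J v) / t ^ k < 1) :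
    ∃ U : Finset α, (#U : ℝ) < m ∧ ∀ v ∈ H, k < #(U ∩ J v) := by
  set F : Finset α → ℝ := fun U => #U / m + ∑ v ∈ H, t ^ #(U ∩ J v) / t ^ k
  have hF : ∑ U, bernoulliWeight p U * F U
      = p * Fintype.card α / m + ∑ v ∈ H, (1 - p * (1 - t)) ^ #(J v) / t ^ k := by
    calc ∑ U, bernoulliWeight p U * F U
        = (∑ U, bernoulliWeight p U * #U) / m
          + ∑ v ∈ H, (∑ U, bernoulliWeight p U * t ^ #(U ∩ J v)) / t ^ k := by
          simp only [F, mul_add, sum_add_distrib, mul_sum, sum_div, mul_div_assoc]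
          rw [sum_comm]
      _ = _ := by
          simp only [sum_bernoulliWeight_mul_card, sum_bernoulliWeight_mul_pow_card_inter]
  obtain ⟨U, hU⟩ := exists_lt_one_of_sum_bernoulliWeight_mul_lt_one hp₀ hp₁ (hF ▸ h)
  have hterms_nonneg : ∀ v ∈ H, 0 ≤ t ^ #(U ∩ J v) / t ^ k := fun v _ => by positivity
  refine ⟨U, ?_, fun v hv => ?_⟩
  · have : (#U : ℝ) / m < 1 := by linarith [sum_nonneg hterms_nonneg]
    rwa [div_lt_one hm] at this
  · have hterm : t ^ #(U ∩ J v) / t ^ k < 1 := by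
      have := single_le_sum hterms_nonneg hv
      have : (0 : ℝ) ≤ #U / m := by positivity
      linarith
    rw [div_lt_one (by positivity)] at hterm
    by_contra! hle
    exact (pow_le_pow_of_le_one ht₀.le ht₁ hle).not_gt hterm

end RandomSubset

theorem Set.PairwiseDisjoint.ncard_mul_le {β : Type*} [Finite β] {𝒞 : Set (Set β)}
    (h𝒞 : 𝒞.PairwiseDisjoint id) {x : ℝ} (hx : ∀ C ∈ 𝒞, x ≤ C.ncard) :
    (𝒞.ncard : ℝ) * x ≤ Nat.card β := by
  have hfin : 𝒞.Finite := Set.toFinite 𝒞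
  calc (𝒞.ncard : ℝ) * x = ∑ _C ∈ hfin.toFinset, x := by
        rw [sum_const, nsmul_eq_mul, Set.ncard_eq_toFinset_card 𝒞 hfin]
    _ ≤ ∑ C ∈ hfin.toFinset, (C.ncard : ℝ) := sum_le_sum fun C hC => hx C (by simpa using hC)
    _ = ((⋃ C ∈ 𝒞, C).ncard : ℝ) := by
        rw [hfin.ncard_biUnion (fun C _ => Set.toFinite C) h𝒞,
          finsum_mem_eq_finite_toFinset_sum _ hfin, Nat.cast_sum]
    _ ≤ Nat.card β := by exact_mod_cast Set.ncard_le_card _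

theorem ncard_eqvGen_classes_subset_mul_le {β : Type*} [Finite β] (r : β → β → Prop)
    (S : Set β) {x : ℝ} (hx : ∀ a ∈ S, x ≤ {b | Relation.EqvGen r a b}.ncard) :
    ({C : Set β | (∃ a, C = {b | Relation.EqvGen r a b}) ∧ C ⊆ S}.ncard : ℝ) * x
      ≤ Nat.card β := by
  have hr := Relation.EqvGen.is_equivalence r
  refine Set.PairwiseDisjoint.ncard_mul_le ?_ ?_
  · rintro _ ⟨⟨a, rfl⟩, -⟩ _ ⟨⟨b, rfl⟩, -⟩ hne
    refine Set.disjoint_left.2 fun c hac hbc => hne ?_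
    ext d
    exact ⟨fun had => hr.trans hbc (hr.trans (hr.symm hac) had),
      fun hbd => hr.trans hac (hr.trans (hr.symm hbc) hbd)⟩
  · rintro _ ⟨⟨a, rfl⟩, haS⟩
    exact hx a (haS (hr.refl a))

section OutDegree

variable {α : Type*}

noncomputable def outDegree (op : α → α → α) (T : Set α) (v : α) : ℕ :=
  {w | w ≠ v ∧ ∃ j ∈ T, op v j = w}.ncard

variable [Fintype α] (op : α → α → α)

theorem exists_injOn_card_eq_outDegree (v : α) :
    ∃ J : Finset α, Set.InjOn (op v) J ∧ (∀ j ∈ J, op v j ≠ v) ∧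
      #J = outDegree op Set.univ v := by
  classical
  obtain ⟨s, hs, hinj⟩ := Set.exists_image_eq_injOn_of_subset_range
    (f := op v) (t := {w | w ≠ v ∧ ∃ j ∈ Set.univ, op v j = w})
    (by rintro w ⟨-, j, -, rfl⟩; exact ⟨j, rfl⟩)
  refine ⟨s.toFinset, by simpa using hinj, fun j hj => ?_, ?_⟩
  · have : op v j ∈ op v '' s := ⟨j, by simpa using hj, rfl⟩
    rw [hs] at this
    exact this.1
  · rw [outDegree, ← hs, hinj.ncard_image, Set.ncard_eq_toFinset_card']

theorem card_inter_le_outDegree [DecidableEq α] {v : α} (U J : Finset α)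
    (hinj : Set.InjOn (op v) J) (hJ : ∀ j ∈ J, op v j ≠ v) :
    #(U ∩ J) ≤ outDegree op U v := by
  rw [← card_image_of_injOn (hinj.mono (by simp)), outDegree, ← Set.ncard_coe_finset]
  refine Set.ncard_le_ncard ?_ (Set.toFinite _)
  intro w hw
  obtain ⟨j, hj, rfl⟩ := mem_image.1 hw
  rw [mem_inter] at hj
  exact ⟨hJ j hj.2, j, hj.1, rfl⟩

theorem outDegree_le_ncard_eqvGen (T : Set α) (v : α) :
    outDegree op T v
      ≤ {b | Relation.EqvGen (fun x y => x ≠ y ∧ ∃ j ∈ T, op x j = y) v b}.ncard :=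
  Set.ncard_le_ncard (fun _ hw => Relation.EqvGen.rel _ _ ⟨hw.1.symm, hw.2⟩) (Set.toFinite _)

end OutDegree

theorem rpow_three_halves_sq {l : ℝ} (hl : 0 ≤ l) : (l ^ (3 / 2 : ℝ)) ^ 2 = l ^ 3 := by
  rw [← rpow_mul_natCast hl]
  norm_num

theorem mul_le_rpow_three_halves {l : ℝ} (hl : 64 ≤ l) : 8 * l ≤ l ^ (3 / 2 : ℝ) := by
  have h8 : 8 ≤ √l := le_sqrt_of_sq_le (by linarith)
  rw [show (3 / 2 : ℝ) = 1 + 1 / 2 by norm_num, rpow_add (by linarith), rpow_one,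
    ← sqrt_eq_rpow]
  nlinarith

theorem one_sub_pow_div_half_pow_floor_le {L : ℝ} (hL : 1 ≤ L) {d : ℕ} (hd : L ^ 2 ≤ d) :
    (1 - 1 / L * (1 - 1 / 2)) ^ d / (1 / 2) ^ ⌊L / 2⌋₊ ≤ exp (-(L / 2 * (1 - log 2))) := by
  have hL₀ : 0 < L := by linarith
  have hbase : 1 - 1 / L * (1 - 1 / 2) = 1 - 1 / (2 * L) := by field_simp; ring
  have hpow : (1 - 1 / L * (1 - 1 / 2)) ^ d ≤ exp (-(L / 2)) := by
    rw [hbase]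
    calc (1 - 1 / (2 * L)) ^ d ≤ exp (-(1 / (2 * L))) ^ d := by
          refine pow_le_pow_left₀ ?_ ?_ d
          · rw [sub_nonneg, div_le_one (by positivity)]
            linarith
          · linarith [add_one_le_exp (-(1 / (2 * L)))]
      _ = exp (-(d / (2 * L))) := by rw [← exp_nat_mul]; ring_nf
      _ ≤ exp (-(L / 2)) := by
          refine exp_le_exp.2 (neg_le_neg ?_)
          rw [div_le_div_iff₀ (by norm_num) (by positivity)]
          nlinarith
  have htwo : (2 : ℝ) ^ ⌊L / 2⌋₊ ≤ exp (L / 2 * log 2) := by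
    rw [← rpow_natCast, rpow_def_of_pos (by norm_num), mul_comm]
    exact exp_le_exp.2 (mul_le_mul_of_nonneg_right (Nat.floor_le (by positivity))
      (log_nonneg (by norm_num)))
  calc (1 - 1 / L * (1 - 1 / 2)) ^ d / (1 / 2) ^ ⌊L / 2⌋₊
      = (1 - 1 / L * (1 - 1 / 2)) ^ d * 2 ^ ⌊L / 2⌋₊ := by
        rw [one_div 2, inv_pow, div_inv_eq_mul]
    _ ≤ exp (-(L / 2)) * exp (L / 2 * log 2) := by gcongr
    _ = exp (-(L / 2 * (1 - log 2))) := by rw [← exp_add]; ring_nf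

theorem two_rpow_mul_exp_lt {l L : ℝ} (hl : 4 ≤ l) (hL : 8 * l ≤ L) :
    2 ^ l * exp (-(L / 2 * (1 - log 2))) < 1 / 3 := by
  have hlog := log_two_lt_d9
  have hlog₀ := log_two_gt_d9
  have hexp : 2 ^ l * exp (-(L / 2 * (1 - log 2))) ≤ exp (-(l / 2)) := by
    rw [rpow_def_of_pos (by norm_num), ← exp_add]
    exact exp_le_exp.2 (by nlinarith)
  have hexp_half : 3 < exp (l / 2) := by linarith [add_one_lt_exp (show l / 2 ≠ 0 by positivity)]
  calc 2 ^ l * exp (-(L / 2 * (1 - log 2))) ≤ (exp (l / 2))⁻¹ := by rwa [← exp_neg]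
    _ < 1 / 3 := by rw [inv_eq_one_div]; gcongr

section MainLemma

variable {α : Type*} [Fintype α] [DecidableEq α]

theorem exists_card_lt_and_rpow_lt_outDegree (op : α → α → α) {l : ℝ} (hl : 64 ≤ l)
    (hα : (Fintype.card α : ℝ) = 2 ^ l) :
    ∃ U : Finset α, (#U : ℝ) < 3 / 2 * Fintype.card α / l ^ (3 / 2 : ℝ) ∧
      ∀ v, l ^ 3 < outDegree op Set.univ v → l ^ (3 / 2 : ℝ) / 2 < outDegree op U v := by
  set L := l ^ (3 / 2 : ℝ)
  have hL₈ : 8 * l ≤ L := mul_le_rpow_three_halves hl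
  have hL₀ : 0 < L := by linarith
  have hsq : L ^ 2 = l ^ 3 := rpow_three_halves_sq (by linarith)
  have hα₀ : (0 : ℝ) < Fintype.card α := by rw [hα]; positivity
  choose J hJinj hJv hJcard using exists_injOn_card_eq_outDegree op
  set H := univ.filter fun v => l ^ 3 < outDegree op Set.univ v
  have hmarkov : 1 / L * Fintype.card α / (3 / 2 * Fintype.card α / L) = 2 / 3 := by
    field_simp
  have htail : ∑ v ∈ H, (1 - 1 / L * (1 - 1 / 2)) ^ #(J v) / (1 / 2) ^ ⌊L / 2⌋₊ < 1 / 3 := by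
    calc ∑ v ∈ H, (1 - 1 / L * (1 - 1 / 2)) ^ #(J v) / (1 / 2) ^ ⌊L / 2⌋₊
        ≤ ∑ _v ∈ H, exp (-(L / 2 * (1 - log 2))) := by
          refine sum_le_sum fun v hv => one_sub_pow_div_half_pow_floor_le (by linarith) ?_
          rw [hsq, hJcard]
          exact (mem_filter.1 hv).2.le
      _ ≤ Fintype.card α * exp (-(L / 2 * (1 - log 2))) := by
          rw [sum_const, nsmul_eq_mul]
          gcongr
          exact_mod_cast card_le_univ H
      _ < 1 / 3 := hα ▸ two_rpow_mul_exp_lt (by linarith) hL₈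
  obtain ⟨U, hU, hUJ⟩ := RandomSubset.exists_card_lt_and_lt_card_inter H J ⌊L / 2⌋₊
    (p := 1 / L) (t := 1 / 2) (m := 3 / 2 * Fintype.card α / L) (by positivity)
    (by rw [div_le_one hL₀]; linarith) (by norm_num) (by norm_num) (by positivity)
    (by rw [hmarkov]; linarith)
  refine ⟨U, hU, fun v hv => ?_⟩
  have hk := hUJ v (mem_filter.2 ⟨mem_univ v, hv⟩)
  calc L / 2 < ⌊L / 2⌋₊ + 1 := Nat.lt_floor_add_one _
    _ ≤ #(U ∩ J v) := by exact_mod_cast hk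
    _ ≤ outDegree op U v := by
      exact_mod_cast card_inter_le_outDegree op U (J v) (hJinj v) (hJv v)

end MainLemma

/-- For all sufficiently large `n` and every rack on `Fin n`, there is a set
`U ⊆ Fin n` of size at most `(3/2) n / (log₂ n)^(3/2)` such that every vertex of
out-degree greater than `(log₂ n)³` in the full reduced graph has out-degree
greater than `(log₂ n)^(3/2) / 2` with respect to `U`; consequently the number
of components of `G_U` contained in `S_{>Δ}` is at most `2n / (log₂ n)^(3/2)`. -/
theorem statement15 :
    ∃ N : ℕ, 0 < N ∧ ∀ n : ℕ, N ≤ n → ∀ op : Fin n → Fin n → Fin n, IsRack op →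
      ∃ U : Set (Fin n),
        ((U.ncard : ℝ) ≤ 3 / 2 * (n : ℝ) / (Real.logb 2 n) ^ ((3 : ℝ) / 2)) ∧
        (∀ v : Fin n,
          (Real.logb 2 n) ^ 3 < (Set.ncard {w | w ≠ v ∧ ∃ j : Fin n, op v j = w} : ℝ) →
          (Real.logb 2 n) ^ ((3 : ℝ) / 2) / 2 <
            (Set.ncard {w | w ≠ v ∧ ∃ j ∈ U, op v j = w} : ℝ)) ∧
        (({C : Set (Fin n) |
            (∃ a, C = {b | Relation.EqvGen
              (fun x y => x ≠ y ∧ ∃ j ∈ U, op x j = y) a b}) ∧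
            C ⊆ {v | (Real.logb 2 n) ^ 3 <
              (Set.ncard {w | w ≠ v ∧ ∃ j : Fin n, op v j = w} : ℝ)}}).ncard : ℝ) ≤
          2 * (n : ℝ) / (Real.logb 2 n) ^ ((3 : ℝ) / 2) := by
  refine ⟨2 ^ 64, by positivity, fun n hn op _ => ?_⟩
  have hn₀ : (0 : ℝ) < n := by exact_mod_cast (show 0 < 2 ^ 64 by positivity).trans_le hn
  have hl : 64 ≤ Real.logb 2 n := by
    rw [Real.le_logb_iff_rpow_le (by norm_num) hn₀]
    exact_mod_cast hn
  have hdeg_univ (v : Fin n) :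
      outDegree op Set.univ v = Set.ncard {w | w ≠ v ∧ ∃ j : Fin n, op v j = w} := by
    simp [outDegree]
  obtain ⟨U, hU, hUdeg⟩ := exists_card_lt_and_rpow_lt_outDegree op hl
    (by rw [Fintype.card_fin, Real.rpow_logb (by norm_num) (by norm_num) hn₀])
  have hdeg (v : Fin n) (hv : _) := hUdeg v (by rwa [hdeg_univ])
  refine ⟨U, by simpa using hU.le, hdeg, ?_⟩
  have hcount := ncard_eqvGen_classes_subset_mul_le
    (fun x y => x ≠ y ∧ ∃ j ∈ (U : Set (Fin n)), op x j = y)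
    {v | Real.logb 2 n ^ 3 < (Set.ncard {w | w ≠ v ∧ ∃ j : Fin n, op v j = w} : ℝ)}
    fun a ha => (hdeg a ha).le.trans (by exact_mod_cast outDegree_le_ncard_eqvGen op (U : Set _) a)
  rw [Nat.card_eq_fintype_card, Fintype.card_fin] at hcount
  have hL₀ : 0 < Real.logb 2 n ^ ((3 : ℝ) / 2) := by positivity
  rw [le_div_iff₀ hL₀]
  linarith
end

section
/- Let X be a finite set and let (X, ▷) and (X, ▷') be racks with associated permutations (f_l)_{l ∈ X} and (f'_l)_{l ∈ X} respectively. Let T ⊆ X and set T⁺ := T ∪ {w ∈ X : ∃ i ∈ T, ∃ l ∈ X, f_l(i) = w ∧ w ≠ i}. Suppose that: (i) f_l(i) = f'_l(i) for every l ∈ X and every i ∈ T; (ii) f_i = f'_i for every i ∈ T⁺; and (iii) C ⊆ X is a component of the graph G_T (an equivalence class of the equivalence relation generated by r_T(a, b) := a ≠ b ∧ ∃ i ∈ T, f_i(a) = b), v ∈ C, and j ∈ X satisfies f_j(v) = f'_j(v). Then f_j(u) = f'_j(u) for every u ∈ C. -/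
/-!
Translating by `i ∈ T` moves `x` to `x ▷ i`, and self-distributivity gives
`(x ▷ i) ▷ j = (x ▷ j) ▷ (i ▷ j)`. The two racks agree on every map involved
(`i ∈ T ⊆ T⁺`, `i ▷ j ∈ T⁺`) and on the value `i ▷ j`, so the same identity holds
for `▷'` with the same outer map `f_{i ▷ j} = f'_{i ▷ j}`; since that map is injective,
`f_j` and `f'_j` agree at `x ▷ i` iff they agree at `x`. Agreement at `j` is therefore
constant on components of `G_T`.
-/

theorem iff_of_eqvGen {X : Type*} {r : X → X → Prop} (P : X → Prop)
    (h : ∀ x y, r x y → (P x ↔ P y)) {a b : X} (hab : Relation.EqvGen r a b) : P a ↔ P b :=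
  Iff.of_eq (Setoid.eqvGen_le (s := Setoid.ker P) (fun x y hxy => propext (h x y hxy)) hab)

theorem agree_at_op_iff {X : Type*} {op op' : X → X → X}
    (hdist : ∀ x y z, op (op x y) z = op (op x z) (op y z))
    (hdist' : ∀ x y z, op' (op' x y) z = op' (op' x z) (op' y z))
    {i j : X} (hinj : Function.Injective (op · (op i j)))
    (hi : ∀ x, op x i = op' x i) (hij : op i j = op' i j)
    (hm : ∀ x, op x (op i j) = op' x (op i j)) (x : X) :
    op (op x i) j = op' (op x i) j ↔ op x j = op' x j := by
  have hrhs : op' (op x i) j = op (op' x j) (op i j) := by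
    rw [hi, hdist', ← hij, hm]
  rw [hdist, hrhs, hinj.eq_iff]

theorem statement16_general {X : Type*}
    (op op' : X → X → X) (hrack : IsRack op) (hrack' : IsRack op')
    (T : Set X)
    (Tplus : Set X)
    (hTplus : Tplus = T ∪ {w | ∃ i ∈ T, ∃ l : X, op i l = w ∧ w ≠ i})
    (h1 : ∀ l : X, ∀ i ∈ T, op i l = op' i l)
    (h2 : ∀ i ∈ Tplus, ∀ x : X, op x i = op' x i)
    (C : Set X)
    (hC : ∃ a, C = {b | Relation.EqvGen (fun x y => x ≠ y ∧ ∃ i ∈ T, op x i = y) a b})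
    (v : X) (hv : v ∈ C) (j : X) (hvj : op v j = op' v j) :
    ∀ u ∈ C, op u j = op' u j := by
  obtain ⟨a, rfl⟩ := hC
  have hstep : ∀ x y, (x ≠ y ∧ ∃ i ∈ T, op x i = y) → (op x j = op' x j ↔ op y j = op' y j) := by
    rintro x _ ⟨-, i, hi, rfl⟩
    have hiT : i ∈ Tplus := hTplus ▸ Or.inl hi
    have hmT : op i j ∈ Tplus := by
      rw [hTplus]
      by_cases h : op i j = i
      · exact Or.inl (by rwa [h])
      · exact Or.inr ⟨i, hi, j, rfl, h⟩
    exact (agree_at_op_iff hrack.2 hrack'.2 (hrack.1 _).1 (h2 i hiT) (h1 j i hi)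
      (h2 _ hmT) x).symm
  intro u hu
  exact (iff_of_eqvGen _ hstep hu).mp ((iff_of_eqvGen _ hstep hv).mpr hvj)

/-- Let `op` and `op'` be two rack operations on a finite set `X`, with
associated maps `f_l = (· ▷ l)` and `f'_l`. Let `T ⊆ X` and let
`T⁺ = T ∪ {w | ∃ i ∈ T, ∃ l, f_l i = w ∧ w ≠ i}`. Suppose the two racks agree
on `T` (as arguments: `f_l i = f'_l i` for `l ∈ X`, `i ∈ T`), agree on all maps
indexed by `T⁺`, and that `C` is a component of `G_T`, `v ∈ C` and `j ∈ X`
with `f_j v = f'_j v`. Then `f_j u = f'_j u` for every `u ∈ C`. -/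
theorem statement16 {X : Type*} [Finite X]
    (op op' : X → X → X) (hrack : IsRack op) (hrack' : IsRack op')
    (T : Set X)
    (Tplus : Set X)
    (hTplus : Tplus = T ∪ {w | ∃ i ∈ T, ∃ l : X, op i l = w ∧ w ≠ i})
    (h1 : ∀ l : X, ∀ i ∈ T, op i l = op' i l)
    (h2 : ∀ i ∈ Tplus, ∀ x : X, op x i = op' x i)
    (C : Set X)
    (hC : ∃ a, C = {b | Relation.EqvGen (fun x y => x ≠ y ∧ ∃ i ∈ T, op x i = y) a b})
    (v : X) (hv : v ∈ C) (j : X) (hvj : op v j = op' v j) :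
    ∀ u ∈ C, op u j = op' u j :=
  statement16_general op op' hrack hrack' T Tplus hTplus h1 h2 C hC v hv j hvj
end

section
/- Let n be a positive integer and let (η_q)_{q=1}^{n} be nonnegative integers with ∑_{q=1}^{n} η_q = n. Then, as real numbers, (∑_{p=1}^{n} η_p/p) · (∑_{q=1}^{n} (log₂ q)·η_q/q) ≤ n²/4. -/
/-!
Since `q ≤ 2 ^ (q - 1)`, each weight satisfies `(1 + log₂ q) / q ≤ 1`, so the two factors add up to
at most `∑ η_q = n`; both are nonnegative, and AM–GM bounds their product by `n² / 4`.
-/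

open Finset Real

lemma mul_le_sq_div_four_of_add_le {a b c : ℝ} (h₀ : 0 ≤ a + b) (h : a + b ≤ c) :
    a * b ≤ c ^ 2 / 4 := by
  nlinarith [four_mul_le_sq_add a b]

lemma logb_two_natCast_le_sub_one {q : ℕ} (hq : 1 ≤ q) : logb 2 q ≤ q - 1 := by
  have hpow : q ≤ 2 ^ (q - 1) := by
    have := Nat.lt_two_pow_self (n := q - 1)
    omega
  calc logb 2 q ≤ logb 2 ((2 : ℝ) ^ (q - 1)) :=
        logb_le_logb_of_le one_lt_two (by exact_mod_cast hq) (by exact_mod_cast hpow)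
    _ = q - 1 := by rw [logb_pow, logb_self_eq_one one_lt_two, mul_one, Nat.cast_sub hq, Nat.cast_one]

lemma one_add_logb_two_div_le_one {q : ℕ} (hq : 1 ≤ q) : (1 + logb 2 q) / q ≤ 1 := by
  have hq₀ : (0 : ℝ) < q := by exact_mod_cast hq
  rw [div_le_one hq₀]
  linarith [logb_two_natCast_le_sub_one hq]

theorem statement17_general (n : ℕ) (η : ℕ → ℕ)
    (hsum : ∑ q ∈ Finset.Icc 1 n, η q = n) :
    (∑ p ∈ Finset.Icc 1 n, (η p : ℝ) / p) *
        (∑ q ∈ Finset.Icc 1 n, Real.logb 2 q * (η q : ℝ) / q) ≤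
      (n : ℝ) ^ 2 / 4 := by
  have hsplit : (∑ p ∈ Icc 1 n, (η p : ℝ) / p) + ∑ q ∈ Icc 1 n, logb 2 q * (η q : ℝ) / q =
      ∑ q ∈ Icc 1 n, (η q : ℝ) * ((1 + logb 2 q) / q) := by
    rw [← sum_add_distrib]
    exact sum_congr rfl fun q _ => by ring
  apply mul_le_sq_div_four_of_add_le
  · rw [hsplit]
    exact sum_nonneg fun q hq => by
      have := logb_nonneg one_lt_two (by exact_mod_cast (mem_Icc.mp hq).1 : (1 : ℝ) ≤ q)
      positivity
  · rw [hsplit]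
    calc ∑ q ∈ Icc 1 n, (η q : ℝ) * ((1 + logb 2 q) / q)
        ≤ ∑ q ∈ Icc 1 n, (η q : ℝ) := sum_le_sum fun q hq =>
          mul_le_of_le_one_right (Nat.cast_nonneg _)
            (one_add_logb_two_div_le_one (mem_Icc.mp hq).1)
      _ = n := by exact_mod_cast hsum

/-- If `(η_q)_{q=1}^n` are nonnegative integers summing to `n`, then
`(∑ η_p / p) · (∑ (log₂ q) η_q / q) ≤ n² / 4`. -/
theorem statement17 (n : ℕ) (hn : 0 < n) (η : ℕ → ℕ)
    (hsum : ∑ q ∈ Finset.Icc 1 n, η q = n) :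
    (∑ p ∈ Finset.Icc 1 n, (η p : ℝ) / p) *
        (∑ q ∈ Finset.Icc 1 n, Real.logb 2 q * (η q : ℝ) / q) ≤
      (n : ℝ) ^ 2 / 4 :=
  statement17_general n η hsum
end
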